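/- arXiv:2306.08706 — 3 statements merged into one kernel-verified Lean document; each statement's English description precedes it below -/
import Mathlib

section
/- For every T > 0, every x₀ ∈ ℝ^d and every continuous g : [0,T] → ℝ^d with g(0) = 0, there exists exactly one continuous function f : [0,T] → ℝ^d such that for all t ∈ [0,T]: f(t) = x₀ − ∫₀ᵗ ∇V(f(s)) ds − ∫₀ᵗ (1/s)·∫₀ˢ ∇F(f(s)−f(u)) du ds + g(t), where the inner time-averaged integrand s ↦ (1/s)∫₀ˢ ∇F(f(s)−f(u)) du (defined for s > 0) is bounded near s = 0 so that the outer integral is well defined. -/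
/-!
The equation is a fixed-point problem `f = Φ f` on `C([0,T], ℝ^d)`. The singular factor `1/s`
is harmless because an average over `[0,s]` of a function bounded by `M` is bounded by `M`; for
the same reason, if `|f - h| ≤ K sⁿ` on `[0,s]` then the averaged interaction terms differ by at
most `2 L_F K sⁿ`, so `|Φ f (t) - Φ h (t)| ≤ (L_V + 2 L_F) K tⁿ⁺¹ / (n + 1)`. Iterating gives
`dist (Φⁿ f) (Φⁿ h) ≤ ((L_V + 2 L_F) T)ⁿ / n! · dist f h`, so some iterate of `Φ` is a contraction
and Banach's fixed-point theorem yields existence and uniqueness.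
-/

open MeasureTheory Set

noncomputable section

abbrev Ed (d : ℕ) : Type := EuclideanSpace ℝ (Fin d)

/-- `f` is a continuous solution on `[0,T]` of the integral equation of the original
self-interacting diffusion (1.1), written with the time-averaged occupation measure
`μ_s = (1/s)∫₀ˢ δ_{f(u)} du`; the inner time-averaged integrand is required to be
bounded on `(0,T]` so that the outer integral is well defined. -/
def IsSIDSolutionOrig {d : ℕ} (V F : Ed d → ℝ) (T : ℝ)
    (x₀ : Ed d) (g : ℝ → Ed d) (f : ℝ → Ed d) : Prop :=
  ContinuousOn f (Icc 0 T) ∧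
  (∃ C : ℝ, ∀ s ∈ Ioc (0:ℝ) T,
    ‖(1 / s) • (∫ u in (0:ℝ)..s, gradient F (f s - f u))‖ ≤ C) ∧
  ∀ t ∈ Icc (0:ℝ) T,
    f t = x₀ - (∫ s in (0:ℝ)..t, gradient V (f s))
      - (∫ s in (0:ℝ)..t, (1 / s) • (∫ u in (0:ℝ)..s, gradient F (f s - f u)))
      + g t

open Function Filter
open scoped NNReal Nat

section Volterra

variable {α : Type*} [MetricSpace α] {T : ℝ}

def VolterraLipschitzWith (L : ℝ≥0) (Φ : C(Icc (0:ℝ) T, α) → C(Icc (0:ℝ) T, α)) : Prop :=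
  ∀ (f h : C(Icc (0:ℝ) T, α)) (K : ℝ) (n : ℕ), 0 ≤ K →
    (∀ t : Icc (0:ℝ) T, dist (f t) (h t) ≤ K * (t : ℝ) ^ n) →
    ∀ t : Icc (0:ℝ) T, dist (Φ f t) (Φ h t) ≤ L * K * (t : ℝ) ^ (n + 1) / (n + 1)

variable {Φ : C(Icc (0:ℝ) T, α) → C(Icc (0:ℝ) T, α)} {L : ℝ≥0}

namespace VolterraLipschitzWith

lemma dist_iterate_apply_le (hΦ : VolterraLipschitzWith L Φ) (f h : C(Icc (0:ℝ) T, α))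
    (n : ℕ) (t : Icc (0:ℝ) T) :
    dist ((Φ^[n] f) t) ((Φ^[n] h) t) ≤ L ^ n / n ! * dist f h * (t : ℝ) ^ n := by
  induction n generalizing t with
  | zero => simpa using ContinuousMap.dist_apply_le_dist t
  | succ n ih =>
    rw [iterate_succ_apply', iterate_succ_apply']
    refine (hΦ _ _ _ n (by positivity) ih t).trans_eq ?_
    rw [Nat.factorial_succ]
    push_cast
    field_simp
    ring

lemma dist_iterate_le (hΦ : VolterraLipschitzWith L Φ) (hT : 0 ≤ T)
    (f h : C(Icc (0:ℝ) T, α)) (n : ℕ) :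
    dist (Φ^[n] f) (Φ^[n] h) ≤ (L * T) ^ n / n ! * dist f h := by
  refine (ContinuousMap.dist_le (by positivity)).2 fun t => ?_
  calc _ ≤ L ^ n / n ! * dist f h * (t : ℝ) ^ n := hΦ.dist_iterate_apply_le f h n t
    _ ≤ L ^ n / n ! * dist f h * T ^ n := by gcongr; exacts [t.2.1, t.2.2]
    _ = (L * T) ^ n / n ! * dist f h := by ring

theorem existsUnique_isFixedPt [CompleteSpace α] [Nonempty α]
    (hΦ : VolterraLipschitzWith L Φ) (hT : 0 ≤ T) : ∃! f, IsFixedPt Φ f := by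
  have : Nonempty C(Icc (0:ℝ) T, α) := ⟨.const _ (Classical.arbitrary α)⟩
  obtain ⟨n, hn⟩ := (FloorSemiring.tendsto_pow_div_factorial_atTop ((L : ℝ) * T)).eventually
    (gt_mem_nhds zero_lt_one) |>.exists
  have hΦn : ContractingWith ⟨(L * T) ^ n / n !, by positivity⟩ Φ^[n] :=
    ⟨hn, LipschitzWith.of_dist_le_mul fun f h => hΦ.dist_iterate_le hT f h n⟩
  exact ⟨_, hΦn.isFixedPt_fixedPoint_iterate, fun y hy => hΦn.fixedPoint_unique (hy.iterate n)⟩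

end VolterraLipschitzWith

end Volterra

lemma intervalIntegral.norm_integral_le_mul_pow_div {E : Type*} [NormedAddCommGroup E]
    [NormedSpace ℝ E] {f : ℝ → E} {t A : ℝ} {n : ℕ} (ht : 0 ≤ t)
    (hf : ∀ s ∈ Ioc 0 t, ‖f s‖ ≤ A * s ^ n) :
    ‖∫ s in (0:ℝ)..t, f s‖ ≤ A * t ^ (n + 1) / (n + 1) := by
  calc ‖∫ s in (0:ℝ)..t, f s‖ ≤ ∫ s in (0:ℝ)..t, A * s ^ n :=
        intervalIntegral.norm_integral_le_of_norm_le ht (.of_forall hf)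
          ((continuous_const.mul (continuous_pow n)).intervalIntegrable 0 t)
    _ = A * t ^ (n + 1) / (n + 1) := by simp [integral_pow, mul_div_assoc]

namespace SelfInteracting

variable {E : Type*} [NormedAddCommGroup E]

lemma exists_norm_comp_sub_IccExtend_le {G : E → E} (hG : Continuous G) {a b : ℝ} (hab : a ≤ b)
    (f : C(Icc a b, E)) : ∃ M, ∀ s u, ‖G (IccExtend hab f s - IccExtend hab f u)‖ ≤ M := by
  obtain ⟨M, hM⟩ := (isCompact_range (hG.comp ((f.continuous.comp continuous_fst).sub
    (f.continuous.comp continuous_snd)))).isBounded.exists_norm_le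
  exact ⟨M, fun s u => hM _ ⟨(projIcc a b hab s, projIcc a b hab u), rfl⟩⟩

variable [NormedSpace ℝ E] {b G : E → E} {c e : ℝ → E} {T : ℝ}

/-- The interaction drift `∫ G (c s - y) μ_s(dy)` against the occupation measure
`μ_s = (1/s) ∫₀ˢ δ_{c u} du`. -/
def timeAvg (G : E → E) (c : ℝ → E) (s : ℝ) : E :=
  (1 / s) • ∫ u in (0:ℝ)..s, G (c s - c u)

lemma timeAvg_congr {c' : ℝ → E} {s : ℝ} (hs : 0 ≤ s) (hc : EqOn c c' (Icc 0 s)) :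
    timeAvg G c s = timeAvg G c' s := by
  unfold timeAvg
  congr 1
  refine intervalIntegral.integral_congr fun u hu => ?_
  rw [uIcc_of_le hs] at hu
  simp only [hc hu, hc (right_mem_Icc.2 hs)]

lemma norm_timeAvg_le {s M : ℝ} (hM : ∀ u ∈ uIcc 0 s, ‖G (c s - c u)‖ ≤ M) :
    ‖timeAvg G c s‖ ≤ M := by
  rcases eq_or_ne s 0 with rfl | hs
  · simpa [timeAvg] using (norm_nonneg _).trans (hM 0 (by simp))
  have hint : ‖∫ u in (0:ℝ)..s, G (c s - c u)‖ ≤ M * |s| := by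
    simpa using intervalIntegral.norm_integral_le_of_norm_le_const fun u hu =>
      hM u (uIoc_subset_uIcc hu)
  calc ‖timeAvg G c s‖ = |s|⁻¹ * ‖∫ u in (0:ℝ)..s, G (c s - c u)‖ := by
        simp [timeAvg, norm_smul]
    _ ≤ |s|⁻¹ * (M * |s|) := by gcongr
    _ = M := by field_simp

lemma norm_timeAvg_sub_le {KG : ℝ≥0} (hG : LipschitzWith KG G) (hc : Continuous c)
    (he : Continuous e) {s δ : ℝ} (hs : 0 < s) (hce : ∀ u ∈ Icc 0 s, ‖c u - e u‖ ≤ δ) :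
    ‖timeAvg G c s - timeAvg G e s‖ ≤ 2 * KG * δ := by
  have hcs := hce s (right_mem_Icc.2 hs.le)
  have hpt : ∀ u ∈ uIoc 0 s, ‖G (c s - c u) - G (e s - e u)‖ ≤ 2 * KG * δ := by
    intro u hu
    rw [uIoc_of_le hs.le] at hu
    calc ‖G (c s - c u) - G (e s - e u)‖ ≤ KG * ‖(c s - e s) - (c u - e u)‖ := by
          rw [sub_sub_sub_comm]; exact hG.norm_sub_le _ _
      _ ≤ KG * (δ + δ) := by
          gcongr
          exact (norm_sub_le _ _).trans (add_le_add hcs (hce u (Ioc_subset_Icc_self hu)))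
      _ = 2 * KG * δ := by ring
  have hint : ‖∫ u in (0:ℝ)..s, (G (c s - c u) - G (e s - e u))‖ ≤ 2 * KG * δ * s := by
    simpa [abs_of_pos hs] using intervalIntegral.norm_integral_le_of_norm_le_const hpt
  have hintegrable (c : ℝ → E) (hc : Continuous c) :
      IntervalIntegrable (fun u => G (c s - c u)) volume 0 s :=
    (hG.continuous.comp (continuous_const.sub hc)).intervalIntegrable 0 s
  calc ‖timeAvg G c s - timeAvg G e s‖
      = s⁻¹ * ‖∫ u in (0:ℝ)..s, (G (c s - c u) - G (e s - e u))‖ := by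
        rw [timeAvg, timeAvg, ← smul_sub,
          ← intervalIntegral.integral_sub (hintegrable c hc) (hintegrable e he)]
        simp [norm_smul, abs_of_pos hs]
    _ ≤ s⁻¹ * (2 * KG * δ * s) := by gcongr
    _ = 2 * KG * δ := by field_simp

lemma intervalIntegrable_timeAvg (hG : Continuous G) (hc : Continuous c) {M : ℝ}
    (hM : ∀ s u, ‖G (c s - c u)‖ ≤ M) (a b : ℝ) :
    IntervalIntegrable (timeAvg G c) volume a b := by
  have hmeas : AEStronglyMeasurable (timeAvg G c) volume :=
    (measurable_const.div measurable_id).aestronglyMeasurable.smul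
      (intervalIntegral.continuous_parametric_intervalIntegral_of_continuous (μ := volume)
        (f := fun s u => G (c s - c u)) (by fun_prop) continuous_id).aestronglyMeasurable
  have hbdd {S : Set ℝ} (hS : volume S ≠ ⊤) : IntegrableOn (timeAvg G c) S :=
    Measure.integrableOn_of_bounded hS hmeas (.of_forall fun s => norm_timeAvg_le fun u _ => hM s u)
  exact ⟨hbdd measure_Ioc_lt_top.ne, hbdd measure_Ioc_lt_top.ne⟩

/-- `b` and `G` stand for `∇V` and `∇F`. -/
def picard (b G : E → E) (x₀ : E) (g c : ℝ → E) (t : ℝ) : E :=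
  x₀ - (∫ s in (0:ℝ)..t, b (c s)) - (∫ s in (0:ℝ)..t, timeAvg G c s) + g t

lemma picard_congr {x₀ : E} {g g' c' : ℝ → E} {t : ℝ} (ht : 0 ≤ t) (hc : EqOn c c' (Icc 0 t))
    (hg : g t = g' t) : picard b G x₀ g c t = picard b G x₀ g' c' t := by
  have hsub {s} (hs : s ∈ uIcc 0 t) : 0 ≤ s ∧ Icc 0 s ⊆ Icc 0 t := by
    rw [uIcc_of_le ht] at hs
    exact ⟨hs.1, Icc_subset_Icc_right hs.2⟩
  unfold picard
  rw [hg, intervalIntegral.integral_congr fun s hs =>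
      congrArg b (hc ((hsub hs).2 (right_mem_Icc.2 (hsub hs).1))),
    intervalIntegral.integral_congr fun s hs => timeAvg_congr (hsub hs).1 (hc.mono (hsub hs).2)]

lemma continuousOn_picard (hb : Continuous b) (hG : Continuous G) (x₀ : E) {g : ℝ → E}
    {S : Set ℝ} (hg : ContinuousOn g S) (hc : Continuous c) {M : ℝ}
    (hM : ∀ s u, ‖G (c s - c u)‖ ≤ M) : ContinuousOn (picard b G x₀ g c) S :=
  ((continuousOn_const.sub (intervalIntegral.continuous_primitive
    (fun _ _ => (hb.comp hc).intervalIntegrable _ _) 0).continuousOn).sub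
    (intervalIntegral.continuous_primitive (intervalIntegrable_timeAvg hG hc hM) 0).continuousOn).add
    hg

lemma norm_picard_sub_le {Kb KG : ℝ≥0} (hb : LipschitzWith Kb b) (hG : LipschitzWith KG G)
    (x₀ : E) (g : ℝ → E) (hc : Continuous c) (he : Continuous e) {Mc Me : ℝ}
    (hMc : ∀ s u, ‖G (c s - c u)‖ ≤ Mc) (hMe : ∀ s u, ‖G (e s - e u)‖ ≤ Me)
    {K t : ℝ} {n : ℕ} (hK : 0 ≤ K) (ht : 0 ≤ t) (hce : ∀ s ∈ Icc 0 t, ‖c s - e s‖ ≤ K * s ^ n) :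
    ‖picard b G x₀ g c t - picard b G x₀ g e t‖ ≤ (Kb + 2 * KG) * K * t ^ (n + 1) / (n + 1) := by
  have hdiff : picard b G x₀ g c t - picard b G x₀ g e t
      = ∫ s in (0:ℝ)..t, ((b (e s) - b (c s)) + (timeAvg G e s - timeAvg G c s)) := by
    have hbc : IntervalIntegrable (fun s => b (c s)) volume 0 t :=
      (hb.continuous.comp hc).intervalIntegrable 0 t
    have hbe : IntervalIntegrable (fun s => b (e s)) volume 0 t :=
      (hb.continuous.comp he).intervalIntegrable 0 t
    have hGc := intervalIntegrable_timeAvg hG.continuous hc hMc 0 t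
    have hGe := intervalIntegrable_timeAvg hG.continuous he hMe 0 t
    rw [intervalIntegral.integral_add (hbe.sub hbc) (hGe.sub hGc),
      intervalIntegral.integral_sub hbe hbc, intervalIntegral.integral_sub hGe hGc, picard, picard]
    abel
  rw [hdiff]
  refine intervalIntegral.norm_integral_le_mul_pow_div ht fun s hs => ?_
  have hcs : ‖c s - e s‖ ≤ K * s ^ n := hce s (Ioc_subset_Icc_self hs)
  have hce_s : ∀ u ∈ Icc 0 s, ‖c u - e u‖ ≤ K * s ^ n := fun u hu =>
    (hce u ⟨hu.1, hu.2.trans hs.2⟩).trans (by gcongr; exacts [hu.1, hu.2])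
  calc ‖(b (e s) - b (c s)) + (timeAvg G e s - timeAvg G c s)‖
      ≤ Kb * ‖c s - e s‖ + 2 * KG * (K * s ^ n) := by
        rw [norm_sub_rev (c s)]
        exact norm_add_le_of_le (hb.norm_sub_le _ _)
          (norm_sub_rev (timeAvg G e s) _ ▸ norm_timeAvg_sub_le hG hc he hs.1 hce_s)
    _ ≤ Kb * (K * s ^ n) + 2 * KG * (K * s ^ n) := by gcongr
    _ = (Kb + 2 * KG) * K * s ^ n := by ring

def picardMap (hb : Continuous b) (hG : Continuous G) (x₀ : E) {g : ℝ → E}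
    (hg : ContinuousOn g (Icc 0 T)) (hT : 0 ≤ T) (f : C(Icc (0:ℝ) T, E)) : C(Icc (0:ℝ) T, E) :=
  ⟨(Icc 0 T).domRestrict (picard b G x₀ g (IccExtend hT f)),
    (continuousOn_picard hb hG x₀ hg f.continuous.Icc_extend'
      (exists_norm_comp_sub_IccExtend_le hG hT f).choose_spec).domRestrict⟩

lemma volterraLipschitzWith_picardMap {Kb KG : ℝ≥0} (hb : LipschitzWith Kb b)
    (hG : LipschitzWith KG G) (x₀ : E) {g : ℝ → E} (hg : ContinuousOn g (Icc 0 T)) (hT : 0 ≤ T) :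
    VolterraLipschitzWith (Kb + 2 * KG) (picardMap hb.continuous hG.continuous x₀ hg hT) := by
  intro f h K n hK hfh t
  obtain ⟨Mf, hMf⟩ := exists_norm_comp_sub_IccExtend_le hG.continuous hT f
  obtain ⟨Mh, hMh⟩ := exists_norm_comp_sub_IccExtend_le hG.continuous hT h
  have hext : ∀ s ∈ Icc 0 (t : ℝ), ‖IccExtend hT f s - IccExtend hT h s‖ ≤ K * s ^ n := by
    intro s hs
    rw [IccExtend_of_mem _ _ ⟨hs.1, hs.2.trans t.2.2⟩,
      IccExtend_of_mem _ _ ⟨hs.1, hs.2.trans t.2.2⟩, ← dist_eq_norm]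
    exact hfh _
  rw [dist_eq_norm]
  push_cast
  exact norm_picard_sub_le hb hG x₀ g f.continuous.Icc_extend' h.continuous.Icc_extend'
    hMf hMh hK t.2.1 hext

section FixedPoint

variable {hb : Continuous b} {hG : Continuous G} {x₀ : E} {g : ℝ → E}
  {hg : ContinuousOn g (Icc 0 T)} {hT : 0 ≤ T}

lemma IccExtend_eq_picard_of_isFixedPt {f : C(Icc (0:ℝ) T, E)}
    (hf : IsFixedPt (picardMap hb hG x₀ hg hT) f) {t : ℝ} (ht : t ∈ Icc 0 T) :
    IccExtend hT f t = picard b G x₀ g (IccExtend hT f) t := by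
  rw [IccExtend_of_mem _ _ ht]
  conv_lhs => rw [← hf]
  rfl

lemma isFixedPt_picardMap_domRestrict {f : ℝ → E} (hf : ContinuousOn f (Icc 0 T))
    (hfix : ∀ t ∈ Icc 0 T, f t = picard b G x₀ g f t) :
    IsFixedPt (picardMap hb hG x₀ hg hT) ⟨(Icc 0 T).domRestrict f, hf.domRestrict⟩ := by
  ext t
  change picard b G x₀ g (IccExtend hT _) t = f t
  rw [hfix t t.2]
  exact picard_congr t.2.1 (fun s hs => IccExtend_of_mem _ _ ⟨hs.1, hs.2.trans t.2.2⟩) rfl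

end FixedPoint

end SelfInteracting

open SelfInteracting

lemma isSIDSolutionOrig_iff {d : ℕ} {V F : Ed d → ℝ} {T : ℝ} {x₀ : Ed d} {g f : ℝ → Ed d} :
    IsSIDSolutionOrig V F T x₀ g f ↔ ContinuousOn f (Icc 0 T) ∧
      (∃ C : ℝ, ∀ s ∈ Ioc (0:ℝ) T, ‖timeAvg (gradient F) f s‖ ≤ C) ∧
      ∀ t ∈ Icc (0:ℝ) T, f t = picard (gradient V) (gradient F) x₀ g f t :=
  Iff.rfl

theorem stmt1_general {d : ℕ}
    (V F : Ed d → ℝ)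
    (LV LF : ℝ)
    (hVlip : ∀ x y : Ed d, ‖gradient V x - gradient V y‖ ≤ LV * ‖x - y‖)
    (hFlip : ∀ x y : Ed d, ‖gradient F x - gradient F y‖ ≤ LF * ‖x - y‖)
    (T : ℝ) (hT : 0 < T)
    (x₀ : Ed d) (g : ℝ → Ed d) (hg : ContinuousOn g (Icc 0 T)) :
    ∃ f : ℝ → Ed d, IsSIDSolutionOrig V F T x₀ g f ∧
      ∀ f₂ : ℝ → Ed d, IsSIDSolutionOrig V F T x₀ g f₂ →
        ∀ t ∈ Icc (0:ℝ) T, f₂ t = f t := by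
  have hb : LipschitzWith LV.toNNReal (gradient V) :=
    .of_dist_le' fun x y => by simpa only [dist_eq_norm] using hVlip x y
  have hG : LipschitzWith LF.toNNReal (gradient F) :=
    .of_dist_le' fun x y => by simpa only [dist_eq_norm] using hFlip x y
  obtain ⟨f, hf, hf_unique⟩ :=
    (volterraLipschitzWith_picardMap hb hG x₀ hg hT.le).existsUnique_isFixedPt hT.le
  obtain ⟨M, hM⟩ := exists_norm_comp_sub_IccExtend_le hG.continuous hT.le f
  refine ⟨IccExtend hT.le f, isSIDSolutionOrig_iff.2 ⟨f.continuous.Icc_extend'.continuousOn,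
    ⟨M, fun s _ => norm_timeAvg_le fun u _ => hM s u⟩,
    fun t ht => IccExtend_eq_picard_of_isFixedPt hf ht⟩, fun f₂ h₂ t ht => ?_⟩
  obtain ⟨hc₂, -, hfix₂⟩ := isSIDSolutionOrig_iff.1 h₂
  rw [IccExtend_of_mem _ _ ht, ← hf_unique _ (isFixedPt_picardMap_domRestrict hc₂ hfix₂)]
  rfl

/-- pathwise existence and uniqueness of the solution of the integral
equation of the self-interacting diffusion (1.1). -/
theorem stmt1 {d : ℕ} (hd : 1 ≤ d)
    (V F : Ed d → ℝ) (hV : ContDiff ℝ 2 V) (hF : ContDiff ℝ 2 F)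
    (LV LF : ℝ) (hLV : 0 ≤ LV) (hLF : 0 ≤ LF)
    (hVlip : ∀ x y : Ed d, ‖gradient V x - gradient V y‖ ≤ LV * ‖x - y‖)
    (hFlip : ∀ x y : Ed d, ‖gradient F x - gradient F y‖ ≤ LF * ‖x - y‖)
    (T : ℝ) (hT : 0 < T)
    (x₀ : Ed d) (g : ℝ → Ed d) (hg : ContinuousOn g (Icc 0 T)) (hg0 : g 0 = 0) :
    ∃ f : ℝ → Ed d, IsSIDSolutionOrig V F T x₀ g f ∧
      ∀ f₂ : ℝ → Ed d, IsSIDSolutionOrig V F T x₀ g f₂ →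
        ∀ t ∈ Icc (0:ℝ) T, f₂ t = f t :=
  stmt1_general V F LV LF hVlip hFlip T hT x₀ g hg
end
end

section
/- Fix a ∈ ℝ^d and suppose there are Δ_μ, Δ_x > 0 and K > 0 such that for every probability measure μ on ℝ^d with ∫|z−a|² dμ(z) ≤ Δ_μ² and every x with |x−a| ≤ Δ_x, ⟨∇V(x) + ∇F*μ(x), x−a⟩ ≥ K·|x−a|². Fix T > 0, t₀ ∈ (0,∞), x₀ ∈ ℝ^d and a probability measure μ₀ with finite second moment, and let X : [0,T] → ℝ^d be continuous with X_t = x₀ − ∫₀ᵗ ∇V(X_s) ds − ∫₀ᵗ (t₀/(t₀+s))·∇F*μ₀(X_s) ds − ∫₀ᵗ (1/(t₀+s))·∫₀ˢ ∇F(X_s−X_u) du ds for all t. If for all t ∈ [0,T] one has M(t) := (t₀·∫|z−a|² dμ₀(z) + ∫₀ᵗ |X_u−a|² du)/(t₀+t) ≤ Δ_μ² and |X_t − a| ≤ Δ_x, then for all t ∈ [0,T]: |X_t − a|² ≤ |x₀ − a|²·e^{−2Kt}. -/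
/-!
Along the path, the drift at time `t` is `∇V(X t) + ∇F * μ_t (X t)` with `μ_t` the occupation
measure, a probability measure whose second moment about `a` is `M(t) ≤ Δμ²`. The attraction
hypothesis therefore gives `d/dt ‖X t - a‖² = -2⟪drift, X t - a⟫ ≤ -2K ‖X t - a‖²`, and
Grönwall's inequality (monotonicity of `‖X t - a‖² e^{2Kt}`) concludes.
-/

open MeasureTheory Set
open scoped RealInnerProductSpace

noncomputable section

open Filter Topology Real
open scoped NNReal

theorem le_mul_exp_of_hasDerivAt_le_mul {g g' : ℝ → ℝ} {c T : ℝ}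
    (hg : ContinuousOn g (Icc 0 T)) (hd : ∀ t ∈ Ioo 0 T, HasDerivAt g (g' t) t)
    (hle : ∀ t ∈ Ioo 0 T, g' t ≤ c * g t) {t : ℝ} (ht : t ∈ Icc 0 T) :
    g t ≤ g 0 * exp (c * t) := by
  have hd' : ∀ s ∈ Ioo 0 T, HasDerivAt (fun s ↦ g s * exp (-(c * s)))
      ((g' s - c * g s) * exp (-(c * s))) s := fun s hs ↦ by
    have he : HasDerivAt (fun s ↦ exp (-(c * s))) (exp (-(c * s)) * -c) s := by
      simpa using ((hasDerivAt_id s).const_mul c).neg.exp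
    exact ((hd s hs).mul he).congr_deriv (by ring)
  have hanti : AntitoneOn (fun s ↦ g s * exp (-(c * s))) (Icc 0 T) := by
    refine antitoneOn_of_deriv_nonpos (convex_Icc 0 T) (hg.mul (by fun_prop)) ?_ ?_ <;>
      rw [interior_Icc]
    · exact fun s hs ↦ (hd' s hs).differentiableAt.differentiableWithinAt
    · intro s hs
      rw [(hd' s hs).deriv]
      exact mul_nonpos_of_nonpos_of_nonneg (by linarith [hle s hs]) (exp_pos _).le
  have h0t := hanti ⟨le_rfl, ht.1.trans ht.2⟩ ht ht.1
  simp only [mul_zero, neg_zero, exp_zero, mul_one] at h0t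
  calc g t = g t * exp (-(c * t)) * exp (c * t) := by
        rw [mul_assoc, ← exp_add, neg_add_cancel, exp_zero, mul_one]
    _ ≤ g 0 * exp (c * t) := by gcongr

theorem hasDerivAt_of_eq_sub_integral {E : Type*} [NormedAddCommGroup E] [NormedSpace ℝ E]
    [CompleteSpace E] {X b : ℝ → E} {x₀ : E} {T : ℝ} (hb : ContinuousOn b (Icc 0 T))
    (hX : ∀ t ∈ Icc 0 T, X t = x₀ - ∫ s in 0..t, b s) {t : ℝ} (ht : t ∈ Ioo 0 T) :
    HasDerivAt X (-b t) t := by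
  have hint : IntervalIntegrable b volume 0 t :=
    (hb.mono (Icc_subset_Icc le_rfl ht.2.le)).intervalIntegrable_of_Icc ht.1.le
  have hmeas : StronglyMeasurableAtFilter b (𝓝 t) :=
    (hb.mono Ioo_subset_Icc_self).stronglyMeasurableAtFilter isOpen_Ioo t ht
  have hnhds : Icc 0 T ∈ 𝓝 t := Icc_mem_nhds ht.1 ht.2
  exact ((intervalIntegral.integral_hasDerivAt_right hint hmeas
    (hb.continuousAt hnhds)).const_sub x₀).congr_of_eventuallyEq (eventuallyEq_of_mem hnhds hX)

theorem continuousOn_intervalIntegral_comp {E G : Type*} [TopologicalSpace E]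
    [NormedAddCommGroup G] [NormedSpace ℝ G] {f : E → E → G}
    (hf : Continuous (Function.uncurry f)) {X : ℝ → E} {T : ℝ} (hX : ContinuousOn X (Icc 0 T)) :
    ContinuousOn (fun s ↦ ∫ u in 0..s, f (X s) (X u)) (Icc 0 T) := by
  rcases lt_or_ge T 0 with hT | hT
  · simp [Icc_eq_empty_of_lt hT]
  -- extend `X` continuously to all of `ℝ`, so that the parametric-integral lemma applies
  set Y : ℝ → E := IccExtend hT ((Icc 0 T).domRestrict X)
  have hY : Continuous Y := hX.domRestrict.Icc_extend'
  have hXY : EqOn X Y (Icc 0 T) := fun s hs ↦ by simp [Y, IccExtend_of_mem hT _ hs]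
  refine (intervalIntegral.continuous_parametric_intervalIntegral_of_continuous (μ := volume)
    (f := fun s u ↦ f (Y s) (Y u)) (hf.comp (hY.prodMap hY)) continuous_id).continuousOn.congr
    fun s hs ↦ intervalIntegral.integral_congr fun u hu ↦ ?_
  have hu' : u ∈ Icc 0 T := uIcc_subset_Icc ⟨le_rfl, hs.1.trans hs.2⟩ hs hu
  simp only [hXY hs, hXY hu']

section Convolution

variable {E G : Type*} [NormedAddCommGroup E] [MeasurableSpace E] [BorelSpace E]
  [SecondCountableTopology E] [NormedAddCommGroup G]
  {g : E → G} {L : ℝ≥0} {μ : Measure E}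

theorem LipschitzWith.integrable_comp_sub [IsFiniteMeasure μ] (hg : LipschitzWith L g)
    (hμ : Integrable (‖·‖) μ) (x : E) : Integrable (fun u ↦ g (x - u)) μ := by
  refine ((integrable_const ‖g x‖).add (hμ.const_mul L)).mono'
    (hg.continuous.comp (continuous_sub_left x)).aestronglyMeasurable (ae_of_all _ fun u ↦ ?_)
  calc ‖g (x - u)‖ ≤ ‖g x‖ + ‖g (x - u) - g x‖ := norm_le_insert' _ _
    _ ≤ ‖g x‖ + L * ‖x - u - x‖ := by gcongr; exact hg.norm_sub_le _ _
    _ = ‖g x‖ + L * ‖u‖ := by rw [sub_sub_cancel_left, norm_neg]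

theorem LipschitzWith.integral_comp_sub [NormedSpace ℝ G] [IsProbabilityMeasure μ]
    (hg : LipschitzWith L g) (hμ : Integrable (‖·‖) μ) :
    LipschitzWith L (fun x ↦ ∫ u, g (x - u) ∂μ) := by
  refine LipschitzWith.of_dist_le_mul fun x y ↦ ?_
  rw [dist_eq_norm, dist_eq_norm, ← integral_sub (hg.integrable_comp_sub hμ x)
    (hg.integrable_comp_sub hμ y)]
  simpa using norm_integral_le_of_norm_le_const (μ := μ) (ae_of_all _ fun u ↦ by
    simpa using hg.norm_sub_le (x - u) (y - u))

end Convolution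

section Occupation

variable {E : Type*} [MeasurableSpace E] (μ₀ : Measure E) (X : ℝ → E) (t₀ t : ℝ)

def occupationMeasure : Measure E :=
  ENNReal.ofReal (t₀ / (t₀ + t)) • μ₀
    + ENNReal.ofReal (1 / (t₀ + t)) • (volume.restrict (Ioc 0 t)).map X

variable {μ₀ X t₀ t}

theorem isProbabilityMeasure_occupationMeasure [IsProbabilityMeasure μ₀] (ht₀ : 0 < t₀)
    (ht : 0 ≤ t) (hX : AEMeasurable X (volume.restrict (Ioc 0 t))) :
    IsProbabilityMeasure (occupationMeasure μ₀ X t₀ t) := by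
  constructor
  have hpos : 0 < t₀ + t := by linarith
  simp only [occupationMeasure, Measure.coe_add, Measure.coe_smul, Pi.add_apply,
    Pi.smul_apply, smul_eq_mul, measure_univ, mul_one,
    Measure.map_apply_of_aemeasurable hX MeasurableSet.univ, preimage_univ,
    Measure.restrict_apply_univ, Real.volume_Ioc, sub_zero]
  rw [← ENNReal.ofReal_mul (by positivity), ← ENNReal.ofReal_add (by positivity) (by positivity),
    show t₀ / (t₀ + t) + 1 / (t₀ + t) * t = 1 by field_simp, ENNReal.ofReal_one]

variable [TopologicalSpace E] [BorelSpace E] {G : Type*} [NormedAddCommGroup G]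
  [SecondCountableTopologyEither E G] {f : E → G}

theorem integrable_map_restrict_Ioc (hf : Continuous f)
    (hX : ContinuousOn X (Icc 0 t)) : Integrable f ((volume.restrict (Ioc 0 t)).map X) :=
  (integrable_map_measure hf.aestronglyMeasurable
    ((hX.mono Ioc_subset_Icc_self).aemeasurable measurableSet_Ioc)).2
    (((hf.comp_continuousOn hX).integrableOn_Icc).mono_set Ioc_subset_Icc_self)

theorem integrable_occupationMeasure (hf : Continuous f) (hfμ₀ : Integrable f μ₀)
    (hX : ContinuousOn X (Icc 0 t)) : Integrable f (occupationMeasure μ₀ X t₀ t) :=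
  (hfμ₀.smul_measure ENNReal.ofReal_ne_top).add_measure
    ((integrable_map_restrict_Ioc hf hX).smul_measure ENNReal.ofReal_ne_top)

theorem integral_occupationMeasure [NormedSpace ℝ G] (hf : Continuous f)
    (hfμ₀ : Integrable f μ₀) (ht₀ : 0 ≤ t₀) (ht : 0 ≤ t) (hX : ContinuousOn X (Icc 0 t)) :
    ∫ z, f z ∂(occupationMeasure μ₀ X t₀ t)
      = (t₀ / (t₀ + t)) • ∫ z, f z ∂μ₀ + (1 / (t₀ + t)) • ∫ u in 0..t, f (X u) := by
  rw [occupationMeasure, integral_add_measure (hfμ₀.smul_measure ENNReal.ofReal_ne_top)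
      ((integrable_map_restrict_Ioc hf hX).smul_measure ENNReal.ofReal_ne_top),
    integral_smul_measure, integral_smul_measure,
    integral_map ((hX.mono Ioc_subset_Icc_self).aemeasurable measurableSet_Ioc)
      hf.aestronglyMeasurable,
    ENNReal.toReal_ofReal (by positivity), ENNReal.toReal_ofReal (by positivity),
    intervalIntegral.integral_of_le ht]

end Occupation

section SelfInteracting

variable {E : Type*} [NormedAddCommGroup E] [NormedSpace ℝ E]
  [MeasurableSpace E] [BorelSpace E] [SecondCountableTopology E]
  {v w : E → E} {L : ℝ≥0} {μ₀ : Measure E} [IsProbabilityMeasure μ₀] {t₀ T : ℝ} {X : ℝ → E}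

def selfInteractingDrift (v w : E → E) (μ₀ : Measure E) (t₀ : ℝ) (X : ℝ → E) (s : ℝ) : E :=
  v (X s) + ∫ z, w (X s - z) ∂(occupationMeasure μ₀ X t₀ s)

theorem selfInteractingDrift_eq (hw : LipschitzWith L w) (hμ₁ : Integrable (‖·‖) μ₀)
    (ht₀ : 0 ≤ t₀) {s : ℝ} (hs : 0 ≤ s) (hX : ContinuousOn X (Icc 0 s)) :
    selfInteractingDrift v w μ₀ t₀ X s = v (X s) + (t₀ / (t₀ + s)) • ∫ u, w (X s - u) ∂μ₀
      + (1 / (t₀ + s)) • ∫ u in 0..s, w (X s - X u) := by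
  rw [selfInteractingDrift, integral_occupationMeasure (f := fun z ↦ w (X s - z))
    (hw.continuous.comp (continuous_sub_left _)) (hw.integrable_comp_sub hμ₁ _) ht₀ hs hX,
    add_assoc]

theorem hasDerivAt_neg_selfInteractingDrift [CompleteSpace E] (hv : Continuous v)
    (hw : LipschitzWith L w) (hμ₁ : Integrable (‖·‖) μ₀) (ht₀ : 0 < t₀)
    (hX : ContinuousOn X (Icc 0 T)) {x₀ : E}
    (hXeq : ∀ t ∈ Icc 0 T, X t = x₀ - (∫ s in 0..t, v (X s))
      - (∫ s in 0..t, (t₀ / (t₀ + s)) • ∫ u, w (X s - u) ∂μ₀)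
      - ∫ s in 0..t, (1 / (t₀ + s)) • ∫ u in 0..s, w (X s - X u))
    {t : ℝ} (ht : t ∈ Ioo 0 T) :
    HasDerivAt X (-selfInteractingDrift v w μ₀ t₀ X t) t := by
  have hden : ContinuousOn (fun s ↦ t₀ + s) (Icc 0 T) := by fun_prop
  have hden₀ : ∀ s ∈ Icc 0 T, t₀ + s ≠ 0 := fun s hs ↦ by linarith [hs.1]
  have h₁ : ContinuousOn (fun s ↦ v (X s)) (Icc 0 T) := hv.comp_continuousOn hX
  have h₂ : ContinuousOn (fun s ↦ (t₀ / (t₀ + s)) • ∫ u, w (X s - u) ∂μ₀) (Icc 0 T) :=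
    (continuousOn_const.div hden hden₀).smul
      ((hw.integral_comp_sub hμ₁).continuous.comp_continuousOn hX)
  have h₃ : ContinuousOn (fun s ↦ (1 / (t₀ + s)) • ∫ u in 0..s, w (X s - X u)) (Icc 0 T) :=
    (continuousOn_const.div hden hden₀).smul
      (continuousOn_intervalIntegral_comp (f := fun x y ↦ w (x - y))
        (hw.continuous.comp continuous_sub) hX)
  have hint : ∀ {f : ℝ → E}, ContinuousOn f (Icc 0 T) → ∀ t ∈ Icc 0 T,
      IntervalIntegrable f volume 0 t := fun hf t ht ↦
    (hf.mono (Icc_subset_Icc le_rfl ht.2)).intervalIntegrable_of_Icc ht.1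
  refine (hasDerivAt_of_eq_sub_integral (x₀ := x₀) ((h₁.add h₂).add h₃) (fun t ht ↦ ?_)
    ht).congr_deriv ?_
  · rw [hXeq t ht]
    simp only [Pi.add_apply]
    rw [intervalIntegral.integral_add ((hint h₁ t ht).add (hint h₂ t ht))
      (hint h₃ t ht), intervalIntegral.integral_add (hint h₁ t ht) (hint h₂ t ht)]
    abel
  · rw [selfInteractingDrift_eq hw hμ₁ ht₀.le ht.1.le (hX.mono (Icc_subset_Icc le_rfl ht.2.le))]
    rfl

end SelfInteracting

theorem stmt11_general {d : ℕ}
    (V F : Ed d → ℝ)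
    (LV LF : ℝ) (hLV : 0 ≤ LV) (hLF : 0 ≤ LF)
    (hVlip : ∀ x y : Ed d, ‖gradient V x - gradient V y‖ ≤ LV * ‖x - y‖)
    (hFlip : ∀ x y : Ed d, ‖gradient F x - gradient F y‖ ≤ LF * ‖x - y‖)
    (a : Ed d)
    (Δμ Δx K : ℝ)
    (hattr : ∀ μ : Measure (Ed d), IsProbabilityMeasure μ →
      Integrable (fun z => ‖z - a‖ ^ 2) μ → (∫ z, ‖z - a‖ ^ 2 ∂μ) ≤ Δμ ^ 2 →
      ∀ x : Ed d, ‖x - a‖ ≤ Δx →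
        K * ‖x - a‖ ^ 2 ≤ ⟪gradient V x + (∫ u, gradient F (x - u) ∂μ), x - a⟫)
    (T : ℝ) (t₀ : ℝ) (ht₀ : 0 < t₀) (x₀ : Ed d)
    (μ₀ : Measure (Ed d)) (hprob : IsProbabilityMeasure μ₀)
    (hμ₀ : Integrable (fun u => ‖u‖ ^ 2) μ₀)
    (X : ℝ → Ed d) (hXc : ContinuousOn X (Icc 0 T))
    (hX : ∀ t ∈ Icc (0:ℝ) T,
      X t = x₀ - (∫ s in (0:ℝ)..t, gradient V (X s))
        - (∫ s in (0:ℝ)..t, (t₀ / (t₀ + s)) • (∫ u, gradient F (X s - u) ∂μ₀))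
        - (∫ s in (0:ℝ)..t,
            (1 / (t₀ + s)) • (∫ u in (0:ℝ)..s, gradient F (X s - X u))))
    (hM : ∀ t ∈ Icc (0:ℝ) T,
      (t₀ * (∫ z, ‖z - a‖ ^ 2 ∂μ₀) + ∫ u in (0:ℝ)..t, ‖X u - a‖ ^ 2) / (t₀ + t)
        ≤ Δμ ^ 2)
    (hball : ∀ t ∈ Icc (0:ℝ) T, ‖X t - a‖ ≤ Δx) :
    ∀ t ∈ Icc (0:ℝ) T,
      ‖X t - a‖ ^ 2 ≤ ‖x₀ - a‖ ^ 2 * Real.exp (-2 * K * t) := by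
  have hv : LipschitzWith ⟨LV, hLV⟩ (gradient V) := .of_dist_le_mul fun x y ↦ by
    rw [dist_eq_norm, dist_eq_norm]; exact hVlip x y
  have hw : LipschitzWith ⟨LF, hLF⟩ (gradient F) := .of_dist_le_mul fun x y ↦ by
    rw [dist_eq_norm, dist_eq_norm]; exact hFlip x y
  have hL2 : MemLp id 2 μ₀ := (memLp_two_iff_integrable_sq_norm aestronglyMeasurable_id).2 hμ₀
  have hμ₁ : Integrable (‖·‖) μ₀ := (hL2.integrable one_le_two).norm
  have hμa : Integrable (fun z ↦ ‖z - a‖ ^ 2) μ₀ :=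
    (memLp_two_iff_integrable_sq_norm (by fun_prop)).1 (hL2.sub (memLp_const a))
  set b := selfInteractingDrift (gradient V) (gradient F) μ₀ t₀ X
  have hcontr : ∀ t ∈ Ioo 0 T, K * ‖X t - a‖ ^ 2 ≤ ⟪b t, X t - a⟫ := by
    intro t ht
    have hXt : ContinuousOn X (Icc 0 t) := hXc.mono (Icc_subset_Icc le_rfl ht.2.le)
    have hsq : Continuous fun z : Ed d ↦ ‖z - a‖ ^ 2 := by fun_prop
    refine hattr _ (isProbabilityMeasure_occupationMeasure ht₀ ht.1.le
      ((hXt.mono Ioc_subset_Icc_self).aemeasurable measurableSet_Ioc))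
      (integrable_occupationMeasure hsq hμa hXt) ?_ _ (hball t (Ioo_subset_Icc_self ht))
    rw [integral_occupationMeasure hsq hμa ht₀.le ht.1.le hXt, smul_eq_mul, smul_eq_mul]
    convert hM t (Ioo_subset_Icc_self ht) using 1
    ring
  intro t ht
  have hX0 : X 0 = x₀ := by simpa using hX 0 ⟨le_rfl, ht.1.trans ht.2⟩
  rw [← hX0]
  refine le_mul_exp_of_hasDerivAt_le_mul (g := fun s ↦ ‖X s - a‖ ^ 2)
    ((hXc.sub continuousOn_const).norm.pow 2)
    (fun s hs ↦ ((hasDerivAt_neg_selfInteractingDrift hv.continuous hw hμ₁ ht₀ hXc hX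
      hs).sub_const a).norm_sq) (fun s hs ↦ ?_) ht
  rw [inner_neg_right, real_inner_comm]
  linarith [hcontr s hs]

/-- exponential contraction towards `a` of the deterministic
generalized self-interacting process under the strong-attraction hypothesis
(Assumption A-2.4), as long as the occupation measure stays `Δ_μ`-close to `δ_a`
and the path stays in the `Δ_x`-ball around `a`. -/
theorem stmt11 {d : ℕ} (hd : 1 ≤ d)
    (V F : Ed d → ℝ) (hV : ContDiff ℝ 2 V) (hF : ContDiff ℝ 2 F)
    (LV LF : ℝ) (hLV : 0 ≤ LV) (hLF : 0 ≤ LF)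
    (hVlip : ∀ x y : Ed d, ‖gradient V x - gradient V y‖ ≤ LV * ‖x - y‖)
    (hFlip : ∀ x y : Ed d, ‖gradient F x - gradient F y‖ ≤ LF * ‖x - y‖)
    (a : Ed d)
    (Δμ Δx K : ℝ) (hΔμ : 0 < Δμ) (hΔx : 0 < Δx) (hK : 0 < K)
    (hattr : ∀ μ : Measure (Ed d), IsProbabilityMeasure μ →
      Integrable (fun z => ‖z - a‖ ^ 2) μ → (∫ z, ‖z - a‖ ^ 2 ∂μ) ≤ Δμ ^ 2 →
      ∀ x : Ed d, ‖x - a‖ ≤ Δx →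
        K * ‖x - a‖ ^ 2 ≤ ⟪gradient V x + (∫ u, gradient F (x - u) ∂μ), x - a⟫)
    (T : ℝ) (hT : 0 < T) (t₀ : ℝ) (ht₀ : 0 < t₀) (x₀ : Ed d)
    (μ₀ : Measure (Ed d)) (hprob : IsProbabilityMeasure μ₀)
    (hμ₀ : Integrable (fun u => ‖u‖ ^ 2) μ₀)
    (X : ℝ → Ed d) (hXc : ContinuousOn X (Icc 0 T))
    (hX : ∀ t ∈ Icc (0:ℝ) T,
      X t = x₀ - (∫ s in (0:ℝ)..t, gradient V (X s))
        - (∫ s in (0:ℝ)..t, (t₀ / (t₀ + s)) • (∫ u, gradient F (X s - u) ∂μ₀))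
        - (∫ s in (0:ℝ)..t,
            (1 / (t₀ + s)) • (∫ u in (0:ℝ)..s, gradient F (X s - X u))))
    (hM : ∀ t ∈ Icc (0:ℝ) T,
      (t₀ * (∫ z, ‖z - a‖ ^ 2 ∂μ₀) + ∫ u in (0:ℝ)..t, ‖X u - a‖ ^ 2) / (t₀ + t)
        ≤ Δμ ^ 2)
    (hball : ∀ t ∈ Icc (0:ℝ) T, ‖X t - a‖ ≤ Δx) :
    ∀ t ∈ Icc (0:ℝ) T,
      ‖X t - a‖ ^ 2 ≤ ‖x₀ - a‖ ^ 2 * Real.exp (-2 * K * t) :=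
  stmt11_general V F LV LF hLV hLF hVlip hFlip a Δμ Δx K hattr T t₀ ht₀ x₀ μ₀ hprob hμ₀ X hXc hX hM
    hball
end
end

section
/- Assume additionally ∇V(a) = 0 and ∇F(0) = 0 for a fixed a ∈ ℝ^d. Fix T > 0, t₀ ∈ (0,∞), R > 0, ρ' > 0, a point x ∈ ℝ^d with |x−a| ≤ R, a probability measure μ₀ with ∫|z−a|² dμ₀(z) ≤ ρ'², and a continuous w : [0,T] → ℝ^d with w(0) = 0. Let X : [0,T] → ℝ^d be the continuous solution of X_t = x − ∫₀ᵗ ∇V(X_s) ds − ∫₀ᵗ (t₀/(t₀+s))·∇F*μ₀(X_s) ds − ∫₀ᵗ (1/(t₀+s))·∫₀ˢ ∇F(X_s−X_u) du ds + w(t). Then for all t ∈ [0,T]: |X_t − x| ≤ (sup_{s∈[0,t]} |w_s| + ((L_V+L_F)·R + L_F·ρ')·t)·exp{(L_V + 2L_F)·t + (t₀+t)·log((t₀+t)/t₀) − t}. -/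
/-!
Every drift term grows at most linearly along the solution: the confinement term like
`L_V (|X_s - x| + R)`, the convolution with `μ₀` like `L_F (|X_s - x| + R + ρ')` (by Jensen the
first moment of `μ₀` is at most `ρ'`), and the self-interaction term like `2 L_F` times a bound
of `|X - x|` on `[0, s]`. As the weights `t₀ / (t₀ + s)` and `s / (t₀ + s)` add up to one, any
nondecreasing `B ≥ |X - x|` on `[0, τ]` gives `|X_τ - x| ≤ M + C t + (L_V + 2 L_F) ∫₀^τ B`, where
`M = sup_{[0, t]} |w|` and `C = (L_V + L_F) R + L_F ρ'`. Continuous induction against the barriers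
`(M + C t + ε) e^{(L_V + 2 L_F) s}` yields `|X_t - x| ≤ (M + C t) e^{(L_V + 2 L_F) t}`, and
`t ≤ (t₀ + t) log ((t₀ + t) / t₀)` turns this into the stated bound.
-/

open MeasureTheory Set

noncomputable section

open Filter Topology Interval

theorem integral_le_of_integral_sq_le {Ω : Type*} [MeasurableSpace Ω] {μ : Measure Ω}
    [IsProbabilityMeasure μ] {f : Ω → ℝ} {ρ : ℝ} (hρ : 0 ≤ ρ) (hfi : Integrable f μ)
    (hf2 : Integrable (fun ω => f ω ^ 2) μ) (h : ∫ ω, f ω ^ 2 ∂μ ≤ ρ ^ 2) :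
    ∫ ω, f ω ∂μ ≤ ρ := by
  have hjensen : (∫ ω, f ω ∂μ) ^ 2 ≤ ∫ ω, f ω ^ 2 ∂μ :=
    (even_two.convexOn_pow).map_integral_le (continuous_pow 2).continuousOn isClosed_univ
      (ae_of_all _ fun _ => mem_univ _) hfi hf2
  exact abs_le_of_sq_le_sq' (hjensen.trans h) hρ |>.2

theorem le_mul_exp_of_le_add_integral_of_monotone {φ : ℝ → ℝ} {A K t : ℝ} (hA : 0 ≤ A)
    (hK : 0 ≤ K) (hφ : ContinuousOn φ (Icc 0 t))
    (h : ∀ τ ∈ Icc 0 t, ∀ B : ℝ → ℝ, Monotone B → Continuous B →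
      (∀ s ∈ Icc 0 τ, φ s ≤ B s) → φ τ ≤ A + K * ∫ s in (0:ℝ)..τ, B s) :
    ∀ s ∈ Icc 0 t, φ s ≤ A * Real.exp (K * s) := by
  have hbarrier : ∀ ε > 0, ∀ s ∈ Icc 0 t, φ s ≤ (A + ε) * Real.exp (K * s) := by
    intro ε hε s hs
    set B : ℝ → ℝ := fun s => (A + ε) * Real.exp (K * s)
    have hBmono : Monotone B := fun u v huv =>
      mul_le_mul_of_nonneg_left (Real.exp_le_exp.2 (mul_le_mul_of_nonneg_left huv hK))
        (by positivity)
    have hBc : Continuous B := by fun_prop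
    -- `K ∫ B = B τ - B 0`, so the integral inequality gives `φ τ ≤ B τ - ε` as long as `φ ≤ B`
    have hKint : ∀ τ, K * ∫ s in (0:ℝ)..τ, B s = B τ - (A + ε) := by
      intro τ
      rw [← intervalIntegral.integral_const_mul, intervalIntegral.integral_eq_sub_of_hasDerivAt
        (f := B) (fun s _ => by simpa [B, mul_comm, mul_left_comm] using
          (((hasDerivAt_id s).const_mul K).exp).const_mul (A + ε))
        ((by fun_prop : Continuous fun s => K * B s).intervalIntegrable _ _)]
      simp [B]
    have hclosed : IsClosed ({s | φ s ≤ B s} ∩ Icc 0 t) := by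
      rw [inter_comm]
      exact (hφ.prodMk hBc.continuousOn).preimage_isClosed_of_isClosed isClosed_Icc
        OrderClosedTopology.isClosed_le'
    refine hclosed.Icc_subset_of_forall_mem_nhdsGT_of_Icc_subset ?_ (fun τ hτ hle => ?_) hs
    · have h0 := h 0 (left_mem_Icc.2 (hs.1.trans hs.2)) (fun _ => φ 0) monotone_const
        continuous_const fun u hu => by rw [Icc_self, mem_singleton_iff] at hu; rw [hu]
      simp only [intervalIntegral.integral_same, mul_zero, add_zero] at h0
      simp only [mem_ofPred_eq, B, mul_zero, Real.exp_zero, mul_one]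
      linarith
    · have hlt : φ τ < B τ := by
        have := h τ (Ico_subset_Icc_self hτ) B hBmono hBc hle
        linarith [hKint τ]
      have hev : ∀ᶠ s in 𝓝[Icc 0 t] τ, φ s < B s :=
        (hφ.prodMk hBc.continuousOn) τ (Ico_subset_Icc_self hτ)
          (IsOpen.mem_nhds (isOpen_lt continuous_fst continuous_snd) hlt)
      filter_upwards [nhdsWithin_le_of_mem (Icc_mem_nhdsGT_of_mem hτ) hev] with u hu using hu.le
  intro s hs
  have hlim : Tendsto (fun ε => (A + ε) * Real.exp (K * s)) (𝓝[>] 0) (𝓝 (A * Real.exp (K * s))) :=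
    tendsto_nhdsWithin_of_tendsto_nhds <| by
      simpa using (by fun_prop : Continuous fun ε => (A + ε) * Real.exp (K * s)).tendsto 0
  exact ge_of_tendsto hlim (eventually_nhdsWithin_of_forall fun ε hε => hbarrier ε hε s hs)

theorem Real.le_add_mul_log_div {t₀ t : ℝ} (ht₀ : 0 < t₀) (hpos : 0 < t₀ + t) :
    t ≤ (t₀ + t) * Real.log ((t₀ + t) / t₀) := by
  have h := Real.one_sub_inv_le_log_of_pos (div_pos hpos ht₀)
  rw [inv_div, one_sub_div hpos.ne', add_sub_cancel_left] at h
  calc t = (t₀ + t) * (t / (t₀ + t)) := by field_simp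
    _ ≤ _ := mul_le_mul_of_nonneg_left h hpos.le

section Drift

variable {E E' : Type*} [NormedAddCommGroup E] [NormedAddCommGroup E'] [NormedSpace ℝ E']
  {G : E → E'} {L : ℝ}

theorem norm_integral_comp_sub_le [MeasurableSpace E] {μ : Measure E} [IsProbabilityMeasure μ]
    (hL : 0 ≤ L) (hG : ∀ z, ‖G z‖ ≤ L * ‖z‖) {a : E} (hμ : Integrable (fun u => ‖u - a‖) μ)
    (y : E) : ‖∫ u, G (y - u) ∂μ‖ ≤ L * (‖y - a‖ + ∫ u, ‖u - a‖ ∂μ) := by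
  have hint : Integrable (fun u => L * (‖y - a‖ + ‖u - a‖)) μ :=
    ((integrable_const _).add hμ).const_mul L
  refine (norm_integral_le_of_norm_le hint (ae_of_all _ fun u => ?_)).trans_eq ?_
  · calc ‖G (y - u)‖ ≤ L * ‖y - u‖ := hG _
      _ ≤ L * (‖y - a‖ + ‖u - a‖) := by
        gcongr
        rw [norm_sub_rev u a]
        exact norm_sub_le_norm_sub_add_norm_sub y a u
  · rw [integral_const_mul, integral_add (integrable_const _) hμ, integral_const]
    simp

theorem norm_intervalIntegral_comp_sub_le (hL : 0 ≤ L) (hG : ∀ z, ‖G z‖ ≤ L * ‖z‖)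
    {X : ℝ → E} {x : E} {β s : ℝ} (hs : 0 ≤ s) (hX : ∀ u ∈ Icc 0 s, ‖X u - x‖ ≤ β) :
    ‖∫ u in (0:ℝ)..s, G (X s - X u)‖ ≤ 2 * L * β * s := by
  have hbound : ∀ u ∈ Ι (0:ℝ) s, ‖G (X s - X u)‖ ≤ 2 * L * β := by
    intro u hu
    rw [uIoc_of_le hs] at hu
    calc ‖G (X s - X u)‖ ≤ L * ‖X s - X u‖ := hG _
      _ ≤ L * (‖X s - x‖ + ‖X u - x‖) := by
        gcongr
        rw [norm_sub_rev (X u) x]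
        exact norm_sub_le_norm_sub_add_norm_sub _ _ _
      _ ≤ L * (β + β) := by
        gcongr
        · exact hX s (right_mem_Icc.2 hs)
        · exact hX u (Ioc_subset_Icc_self hu)
      _ = 2 * L * β := by ring
  simpa [abs_of_nonneg hs] using intervalIntegral.norm_integral_le_of_norm_le_const hbound

end Drift

theorem intervalIntegral.norm_integral_smul_le {E : Type*} [NormedAddCommGroup E]
    [NormedSpace ℝ E] {f : ℝ → E} {c g : ℝ → ℝ} {τ : ℝ} (hτ : 0 ≤ τ)
    (hc : ∀ s ∈ Ioc 0 τ, 0 ≤ c s) (hf : ∀ s ∈ Ioc 0 τ, ‖f s‖ ≤ g s)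
    (hcg : IntervalIntegrable (fun s => c s * g s) volume 0 τ) :
    ‖∫ s in (0:ℝ)..τ, c s • f s‖ ≤ ∫ s in (0:ℝ)..τ, c s * g s := by
  refine intervalIntegral.norm_integral_le_of_norm_le hτ (ae_of_all _ fun s hs => ?_) hcg
  rw [norm_smul, Real.norm_of_nonneg (hc s hs)]
  exact mul_le_mul_of_nonneg_left (hf s hs) (hc s hs)

theorem drift_weights_le {LV LF R ρ t₀ s β : ℝ} (hLF : 0 ≤ LF) (hRρ : 0 ≤ R + ρ) (hβ : 0 ≤ β)
    (ht₀ : 0 < t₀) (hs : 0 ≤ s) :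
    LV * (β + R) + t₀ / (t₀ + s) * (LF * (β + R + ρ)) + 1 / (t₀ + s) * (2 * LF * β * s)
      ≤ ((LV + LF) * R + LF * ρ) + (LV + 2 * LF) * β := by
  have hden : 0 < t₀ + s := by linarith
  have hpq : t₀ / (t₀ + s) + s / (t₀ + s) = 1 := by rw [← add_div, div_self hden.ne']
  have h₁ := mul_nonneg (mul_nonneg hLF hRρ) (div_nonneg hs hden.le)
  have h₂ := mul_nonneg (mul_nonneg hLF hβ) (div_pos ht₀ hden).le
  linear_combination (LF * (R + ρ) + 2 * LF * β) * hpq + h₁ + h₂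

section SelfInteracting

variable {E : Type*} [NormedAddCommGroup E] [NormedSpace ℝ E] [MeasurableSpace E]
  {μ : Measure E} [IsProbabilityMeasure μ] {b G : E → E} {LV LF R ρ t₀ τ : ℝ} {a x : E}
  {w X : ℝ → E} {B : ℝ → ℝ}

theorem norm_drift_integrals_le
    (hLV : 0 ≤ LV) (hLF : 0 ≤ LF) (hb : ∀ y, ‖b y‖ ≤ LV * ‖y - a‖)
    (hG : ∀ z, ‖G z‖ ≤ LF * ‖z‖) (ht₀ : 0 < t₀) (hx : ‖x - a‖ ≤ R)
    (hμ : Integrable (fun u => ‖u - a‖) μ) (hμρ : ∫ u, ‖u - a‖ ∂μ ≤ ρ) (hτ : 0 ≤ τ)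
    (hB : Monotone B) (hBc : Continuous B) (hXB : ∀ s ∈ Icc 0 τ, ‖X s - x‖ ≤ B s) :
    ‖∫ s in (0:ℝ)..τ, b (X s)‖
        + ‖∫ s in (0:ℝ)..τ, (t₀ / (t₀ + s)) • (∫ u, G (X s - u) ∂μ)‖
        + ‖∫ s in (0:ℝ)..τ, (1 / (t₀ + s)) • (∫ u in (0:ℝ)..s, G (X s - X u))‖
      ≤ ((LV + LF) * R + LF * ρ) * τ + (LV + 2 * LF) * ∫ s in (0:ℝ)..τ, B s := by
  have hR : 0 ≤ R := (norm_nonneg _).trans hx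
  have hρ : 0 ≤ ρ := (integral_nonneg fun _ => norm_nonneg _).trans hμρ
  have hden : ∀ s ∈ Icc 0 τ, t₀ + s ≠ 0 := fun s hs => by linarith [hs.1]
  set g₁ : ℝ → ℝ := fun s => LV * (B s + R)
  set g₂ : ℝ → ℝ := fun s => t₀ / (t₀ + s) * (LF * (B s + R + ρ))
  set g₃ : ℝ → ℝ := fun s => 1 / (t₀ + s) * (2 * LF * B s * s)
  have hg₁ : IntervalIntegrable g₁ volume 0 τ :=
    (by fun_prop : Continuous g₁).intervalIntegrable _ _
  have hg₂ : IntervalIntegrable g₂ volume 0 τ :=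
    ContinuousOn.intervalIntegrable_of_Icc hτ (by fun_prop (disch := exact hden))
  have hg₃ : IntervalIntegrable g₃ volume 0 τ :=
    ContinuousOn.intervalIntegrable_of_Icc hτ (by fun_prop (disch := exact hden))
  have h₁ : ‖∫ s in (0:ℝ)..τ, b (X s)‖ ≤ ∫ s in (0:ℝ)..τ, g₁ s := by
    refine intervalIntegral.norm_integral_le_of_norm_le hτ (ae_of_all _ fun s hs => ?_) hg₁
    calc ‖b (X s)‖ ≤ LV * ‖X s - a‖ := hb _
      _ ≤ LV * (‖X s - x‖ + ‖x - a‖) := by gcongr; exact norm_sub_le_norm_sub_add_norm_sub _ _ _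
      _ ≤ LV * (B s + R) := by gcongr; exact hXB s (Ioc_subset_Icc_self hs)
  have hconv : ∀ s ∈ Ioc 0 τ, ‖∫ u, G (X s - u) ∂μ‖ ≤ LF * (B s + R + ρ) := fun s hs =>
    calc ‖∫ u, G (X s - u) ∂μ‖ ≤ LF * (‖X s - a‖ + ∫ u, ‖u - a‖ ∂μ) :=
          norm_integral_comp_sub_le hLF hG hμ _
      _ ≤ LF * ((‖X s - x‖ + ‖x - a‖) + ρ) := by
        gcongr; exact norm_sub_le_norm_sub_add_norm_sub _ _ _
      _ ≤ LF * (B s + R + ρ) := by gcongr; exact hXB s (Ioc_subset_Icc_self hs)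
  have h₂ := intervalIntegral.norm_integral_smul_le hτ
    (fun s hs => div_nonneg ht₀.le (by linarith [hs.1])) hconv hg₂
  have h₃ := intervalIntegral.norm_integral_smul_le hτ
    (fun s hs => one_div_nonneg.2 (by linarith [hs.1])) (fun s hs =>
      norm_intervalIntegral_comp_sub_le hLF hG hs.1.le fun u hu =>
        (hXB u ⟨hu.1, hu.2.trans hs.2⟩).trans (hB hu.2)) hg₃
  have hpt : ∀ s ∈ Icc 0 τ,
      g₁ s + g₂ s + g₃ s ≤ ((LV + LF) * R + LF * ρ) + (LV + 2 * LF) * B s := fun s hs =>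
    drift_weights_le hLF (add_nonneg hR hρ) ((norm_nonneg _).trans (hXB s hs)) ht₀ hs.1
  have hBi : IntervalIntegrable B volume 0 τ := hBc.intervalIntegrable _ _
  calc _ ≤ (∫ s in (0:ℝ)..τ, g₁ s) + (∫ s in (0:ℝ)..τ, g₂ s) + (∫ s in (0:ℝ)..τ, g₃ s) := by
        gcongr
    _ = ∫ s in (0:ℝ)..τ, g₁ s + g₂ s + g₃ s := by
        rw [intervalIntegral.integral_add (hg₁.add hg₂) hg₃,
          intervalIntegral.integral_add hg₁ hg₂]
    _ ≤ ∫ s in (0:ℝ)..τ, ((LV + LF) * R + LF * ρ) + (LV + 2 * LF) * B s :=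
        intervalIntegral.integral_mono_on hτ ((hg₁.add hg₂).add hg₃)
          (intervalIntegrable_const.add (hBi.const_mul _)) hpt
    _ = _ := by
        rw [intervalIntegral.integral_add intervalIntegrable_const (hBi.const_mul _),
          intervalIntegral.integral_const, intervalIntegral.integral_const_mul, smul_eq_mul,
          sub_zero, mul_comm τ]

theorem norm_sub_le_of_selfInteracting_eq
    (hLV : 0 ≤ LV) (hLF : 0 ≤ LF) (hb : ∀ y, ‖b y‖ ≤ LV * ‖y - a‖)
    (hG : ∀ z, ‖G z‖ ≤ LF * ‖z‖) (ht₀ : 0 < t₀) (hx : ‖x - a‖ ≤ R)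
    (hμ : Integrable (fun u => ‖u - a‖) μ) (hμρ : ∫ u, ‖u - a‖ ∂μ ≤ ρ) (hτ : 0 ≤ τ)
    (hB : Monotone B) (hBc : Continuous B) (hXB : ∀ s ∈ Icc 0 τ, ‖X s - x‖ ≤ B s)
    (hXτ : X τ = x - (∫ s in (0:ℝ)..τ, b (X s))
        - (∫ s in (0:ℝ)..τ, (t₀ / (t₀ + s)) • (∫ u, G (X s - u) ∂μ))
        - (∫ s in (0:ℝ)..τ, (1 / (t₀ + s)) • (∫ u in (0:ℝ)..s, G (X s - X u)))
        + w τ) :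
    ‖X τ - x‖
      ≤ ‖w τ‖ + ((LV + LF) * R + LF * ρ) * τ + (LV + 2 * LF) * ∫ s in (0:ℝ)..τ, B s := by
  have hdrift := norm_drift_integrals_le hLV hLF hb hG ht₀ hx hμ hμρ hτ hB hBc hXB
  have htri : ‖X τ - x‖ ≤ ‖w τ‖ + ‖∫ s in (0:ℝ)..τ, b (X s)‖
      + ‖∫ s in (0:ℝ)..τ, (t₀ / (t₀ + s)) • (∫ u, G (X s - u) ∂μ)‖
      + ‖∫ s in (0:ℝ)..τ, (1 / (t₀ + s)) • (∫ u in (0:ℝ)..s, G (X s - X u))‖ := by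
    rw [hXτ, show ∀ p q r v : E, x - p - q - r + v - x = v - p - q - r by intros; abel]
    exact (norm_sub_le _ _).trans (add_le_add_left ((norm_sub_le _ _).trans
      (add_le_add_left (norm_sub_le _ _) _)) _)
  linarith

end SelfInteracting

theorem stmt12_general {d : ℕ}
    (V F : Ed d → ℝ)
    (LV LF : ℝ) (hLV : 0 ≤ LV) (hLF : 0 ≤ LF)
    (hVlip : ∀ x y : Ed d, ‖gradient V x - gradient V y‖ ≤ LV * ‖x - y‖)
    (hFlip : ∀ x y : Ed d, ‖gradient F x - gradient F y‖ ≤ LF * ‖x - y‖)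
    (a : Ed d) (hVa : gradient V a = 0) (hF0 : gradient F 0 = 0)
    (T : ℝ) (t₀ : ℝ) (ht₀ : 0 < t₀)
    (R ρ' : ℝ) (hρ' : 0 < ρ')
    (x : Ed d) (hx : ‖x - a‖ ≤ R)
    (μ₀ : Measure (Ed d)) (hprob : IsProbabilityMeasure μ₀)
    (hμ₀ : Integrable (fun z => ‖z - a‖ ^ 2) μ₀)
    (hμ₀mom : (∫ z, ‖z - a‖ ^ 2 ∂μ₀) ≤ ρ' ^ 2)
    (w : ℝ → Ed d) (hw : ContinuousOn w (Icc 0 T))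
    (X : ℝ → Ed d) (hXc : ContinuousOn X (Icc 0 T))
    (hX : ∀ t ∈ Icc (0:ℝ) T,
      X t = x - (∫ s in (0:ℝ)..t, gradient V (X s))
        - (∫ s in (0:ℝ)..t, (t₀ / (t₀ + s)) • (∫ u, gradient F (X s - u) ∂μ₀))
        - (∫ s in (0:ℝ)..t,
            (1 / (t₀ + s)) • (∫ u in (0:ℝ)..s, gradient F (X s - X u)))
        + w t) :
    ∀ t ∈ Icc (0:ℝ) T,
      ‖X t - x‖ ≤
        (sSup ((fun s => ‖w s‖) '' Icc 0 t) + ((LV + LF) * R + LF * ρ') * t) *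
          Real.exp ((LV + 2 * LF) * t + (t₀ + t) * Real.log ((t₀ + t) / t₀) - t) := by
  intro t ht
  set M := sSup ((fun s => ‖w s‖) '' Icc 0 t)
  set C := (LV + LF) * R + LF * ρ'
  have hwM : ∀ s ∈ Icc 0 t, ‖w s‖ ≤ M := fun s hs =>
    le_csSup (isCompact_Icc.image_of_continuousOn
      (hw.mono (Icc_subset_Icc_right ht.2)).norm).bddAbove ⟨s, hs, rfl⟩
  have hC : 0 ≤ C := add_nonneg (mul_nonneg (add_nonneg hLV hLF) ((norm_nonneg _).trans hx))
    (mul_nonneg hLF hρ'.le)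
  have hA : 0 ≤ M + C * t :=
    add_nonneg ((norm_nonneg _).trans (hwM t ⟨ht.1, le_rfl⟩)) (mul_nonneg hC ht.1)
  have hμ₁ : Integrable (fun z => ‖z - a‖) μ₀ :=
    ((memLp_two_iff_integrable_sq (by fun_prop)).2 hμ₀).integrable one_le_two
  have hgrowth : ‖X t - x‖ ≤ (M + C * t) * Real.exp ((LV + 2 * LF) * t) := by
    refine le_mul_exp_of_le_add_integral_of_monotone (φ := fun s => ‖X s - x‖) hA
      (by positivity) ((hXc.mono (Icc_subset_Icc_right ht.2)).sub continuousOn_const).norm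
      (fun τ hτ B hB hBc hXB => ?_) t ⟨ht.1, le_rfl⟩
    have hdrift := norm_sub_le_of_selfInteracting_eq hLV hLF
      (fun y => by simpa [hVa] using hVlip y a) (fun z => by simpa [hF0] using hFlip z 0) ht₀ hx
      hμ₁ (integral_le_of_integral_sq_le hρ'.le hμ₁ hμ₀ hμ₀mom) hτ.1 hB hBc hXB
      (hX τ ⟨hτ.1, hτ.2.trans ht.2⟩)
    linarith [hwM τ hτ, mul_le_mul_of_nonneg_left hτ.2 hC]
  calc ‖X t - x‖ ≤ (M + C * t) * Real.exp ((LV + 2 * LF) * t) := hgrowth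
    _ ≤ _ := by gcongr; linarith [Real.le_add_mul_log_div ht₀ (by linarith [ht.1] : 0 < t₀ + t)]

/-- pathwise Grönwall estimate for the forced generalized
self-interacting dynamics (the forcing path `w` plays the role of the scaled
Brownian path `σW`), used in the control of the dynamics over small time
intervals (Lemma 4.7). -/
theorem stmt12 {d : ℕ} (hd : 1 ≤ d)
    (V F : Ed d → ℝ) (hV : ContDiff ℝ 2 V) (hF : ContDiff ℝ 2 F)
    (LV LF : ℝ) (hLV : 0 ≤ LV) (hLF : 0 ≤ LF)
    (hVlip : ∀ x y : Ed d, ‖gradient V x - gradient V y‖ ≤ LV * ‖x - y‖)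
    (hFlip : ∀ x y : Ed d, ‖gradient F x - gradient F y‖ ≤ LF * ‖x - y‖)
    (a : Ed d) (hVa : gradient V a = 0) (hF0 : gradient F 0 = 0)
    (T : ℝ) (hT : 0 < T) (t₀ : ℝ) (ht₀ : 0 < t₀)
    (R ρ' : ℝ) (hR : 0 < R) (hρ' : 0 < ρ')
    (x : Ed d) (hx : ‖x - a‖ ≤ R)
    (μ₀ : Measure (Ed d)) (hprob : IsProbabilityMeasure μ₀)
    (hμ₀ : Integrable (fun z => ‖z - a‖ ^ 2) μ₀)
    (hμ₀mom : (∫ z, ‖z - a‖ ^ 2 ∂μ₀) ≤ ρ' ^ 2)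
    (w : ℝ → Ed d) (hw : ContinuousOn w (Icc 0 T)) (hw0 : w 0 = 0)
    (X : ℝ → Ed d) (hXc : ContinuousOn X (Icc 0 T))
    (hX : ∀ t ∈ Icc (0:ℝ) T,
      X t = x - (∫ s in (0:ℝ)..t, gradient V (X s))
        - (∫ s in (0:ℝ)..t, (t₀ / (t₀ + s)) • (∫ u, gradient F (X s - u) ∂μ₀))
        - (∫ s in (0:ℝ)..t,
            (1 / (t₀ + s)) • (∫ u in (0:ℝ)..s, gradient F (X s - X u)))
        + w t) :
    ∀ t ∈ Icc (0:ℝ) T,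
      ‖X t - x‖ ≤
        (sSup ((fun s => ‖w s‖) '' Icc 0 t) + ((LV + LF) * R + LF * ρ') * t) *
          Real.exp ((LV + 2 * LF) * t + (t₀ + t) * Real.log ((t₀ + t) / t₀) - t) :=
  stmt12_general V F LV LF hLV hLF hVlip hFlip a hVa hF0 T t₀ ht₀ R ρ' hρ' x hx μ₀ hprob hμ₀ hμ₀mom
    w hw X hXc hX
end
end
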